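/- Let $G = \bigcup_{i=1}^k S_{n_i}$ be a disjoint union of $k$ stars with $n_1 \ge n_2 \ge \cdots \ge n_k$ vertices. If $q < k$ then $\operatorname{Z}_q(G) = k - q + \sum_{i=1}^{q} \operatorname{Z}(S_{n_i})$, and if $q \ge k$ then $\operatorname{Z}_q(G) = \sum_{i=1}^{k} \operatorname{Z}(S_{n_i})$, where $\operatorname{Z}(S_m) = \max\{1, m-2\}$ is the standard zero forcing number of the star on $m$ vertices. -/

import Mathlib

open SimpleGraph

namespace ZqGame

variable {V : Type*}

/-- A blue vertex `v` forces the white vertex `w`, where only white vertices in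
`Wallow` are taken into account (used for Rule 3, where play is restricted to the
subgraph induced by the blue set together with the returned white components). -/
def ForceIn (G : SimpleGraph V) (B : Set V) (Wallow : Set V) (v w : V) : Prop :=
  v ∈ B ∧ w ∉ B ∧ w ∈ Wallow ∧ G.Adj v w ∧
    ∀ u, G.Adj v u → u ∉ B → u ∈ Wallow → u = w

/-- The standard color change rule: `v` is blue and `w` is its unique white neighbor. -/
def Force (G : SimpleGraph V) (B : Set V) (v w : V) : Prop :=
  ForceIn G B Set.univ v w

/-- The white connected component of `G - B` containing the white vertex `w`. -/
def WhiteComp (G : SimpleGraph V) (B : Set V) (w : V) : Set V :=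
  {x | Relation.ReflTransGen (fun a b => G.Adj a b ∧ a ∉ B ∧ b ∉ B) w x}

/-- `W` is a white component, i.e. a connected component of `G - B`. -/
def IsWhiteComp (G : SimpleGraph V) (B : Set V) (W : Set V) : Prop :=
  ∃ w, w ∉ B ∧ W = WhiteComp G B w

/-- An active vertex: a blue vertex with at least two white neighbors. -/
def Active (G : SimpleGraph V) (B : Set V) (a : V) : Prop :=
  a ∈ B ∧ ∃ w₁ w₂, w₁ ≠ w₂ ∧ G.Adj a w₁ ∧ G.Adj a w₂ ∧ w₁ ∉ B ∧ w₂ ∉ B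

end ZqGame

namespace ZqGame

variable {V : Type*}

/-- `Win G q B t` : in the `Z_q`-forcing game on `G` starting from blue set `B`,
Blue has a strategy spending at most `t` tokens that colors every vertex blue
against any (adversarial) play by White.
* `all` : every vertex is already blue.
* `rule1` : spend one token to color an arbitrary vertex blue.
* `rule2` : a blue vertex with exactly one white neighbor forces it, for free.
* `rule3` : Blue announces a collection `𝒲` of at least `q + 1` white components;
  for every nonempty sub-collection `𝒮` that White may return, Blue can perform a
  Rule 2 force (`vf 𝒮 → wf 𝒮`) on the subgraph induced by `B` together with `⋃ 𝒮`,
  and continue from the resulting position. -/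
inductive Win (G : SimpleGraph V) (q : ℕ) : Set V → ℕ → Prop
  | all (B : Set V) (t : ℕ) : (∀ v, v ∈ B) → Win G q B t
  | rule1 (B : Set V) (t : ℕ) (v : V) : Win G q (insert v B) t → Win G q B (t + 1)
  | rule2 (B : Set V) (t : ℕ) (v w : V) :
      Force G B v w → Win G q (insert w B) t → Win G q B t
  | rule3 (B : Set V) (t : ℕ) (𝒲 : Finset (Set V))
      (vf wf : Finset (Set V) → V) :
      (∀ W ∈ 𝒲, IsWhiteComp G B W) → q + 1 ≤ 𝒲.card →
      (∀ 𝒮 : Finset (Set V), 𝒮 ⊆ 𝒲 → 𝒮.Nonempty →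
        ForceIn G B (⋃₀ (𝒮 : Set (Set V))) (vf 𝒮) (wf 𝒮)) →
      (∀ 𝒮 : Finset (Set V), 𝒮 ⊆ 𝒲 → 𝒮.Nonempty →
        Win G q (insert (wf 𝒮) B) t) →
      Win G q B t

/-- `Z_q(G, B)` : the minimum number of additional tokens Blue must spend to win the
`Z_q`-forcing game on `G` starting from blue set `B`. -/
noncomputable def cost (G : SimpleGraph V) (q : ℕ) (B : Set V) : ℕ :=
  sInf {t | Win G q B t}

/-- `Z_q(G)` : the `Z_q`-forcing number of `G`. -/
noncomputable def Zq (G : SimpleGraph V) (q : ℕ) : ℕ := cost G q ∅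

end ZqGame

namespace ZqGame

variable {V : Type*}

/-- The set of vertices eventually colored blue by exhaustively applying the standard
zero forcing color change rule starting from `B`. -/
inductive ZFDeriv (G : SimpleGraph V) (B : Set V) : V → Prop
  | base (v : V) : v ∈ B → ZFDeriv G B v
  | force (v w : V) : ZFDeriv G B v → G.Adj v w →
      (∀ u, G.Adj v u → u ≠ w → ZFDeriv G B u) → ZFDeriv G B w

/-- `B` is a zero forcing set of `G`. -/
def IsZFSet (G : SimpleGraph V) (B : Set V) : Prop := ∀ v, ZFDeriv G B v

/-- The standard zero forcing number `Z(G)`. -/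
noncomputable def Z (G : SimpleGraph V) [Fintype V] [DecidableEq V] : ℕ :=
  sInf {m | ∃ B : Finset V, B.card = m ∧ IsZFSet G ↑B}

end ZqGame

namespace ZqGame

/-- The star graph on `m` vertices: vertex `0` is the center, adjacent to all others. -/
def starGraph (m : ℕ) : SimpleGraph (Fin m) :=
  SimpleGraph.fromRel (fun a _ => (a : ℕ) = 0)

/-- A disjoint union of `k` stars, the `i`-th on `n i` vertices (with center `⟨i, 0⟩`). -/
def starForest (k : ℕ) (n : ℕ → ℕ) : SimpleGraph (Σ i : Fin k, Fin (n i)) :=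
  SimpleGraph.fromRel (fun a b => a.1 = b.1 ∧ (a.2 : ℕ) = 0)

end ZqGame

open SimpleGraph

/-!
Write `Z(S_m) = (m - 3) + 1` (truncated subtraction), so the claim reads
`Z_q = k + ∑_{i < min q k} (n_i - 3)`.

Lower bound. Give an all-white star `S_m` weight `m - 3` and any other star weight
(number of white leaves) - 1, and take as potential the number of all-white stars plus the sum
of the `q` largest weights. A token lowers it by at most one and a free force never lowers it.
Under Rule 3 the announced components lie in distinct stars (two in one star would make the
forcing center see two white leaves), so White returns only the one whose star has least weight:
at least `q` other stars weigh as much, and the sum of the `q` largest weights does not drop.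

Upper bound. Blue puts a token on the last vertex of each star; every star is then touched and
has `n_i - 2` white leaves besides possibly a white center. Blue forces whenever possible. If
`q + 1` stars have at least two white leaves, Blue announces one white leaf of each (singleton
components, each forced by its blue center) under Rule 3. Otherwise these stars are all among the
`q` heaviest, and a token on a leaf of one of them pays for itself.
-/

open Finset

namespace ZqGame

section Game

variable {V : Type*} {G : SimpleGraph V} {q : ℕ}

theorem Win.mono {B : Set V} {t t' : ℕ} (h : Win G q B t) (ht : t ≤ t') : Win G q B t' := by
  induction h generalizing t' with
  | all B t hall => exact .all B t' hall
  | rule1 B t v _ ih =>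
    obtain ⟨t', rfl⟩ : ∃ s, t' = s + 1 := ⟨t' - 1, by omega⟩
    exact .rule1 B t' v (ih (by omega))
  | rule2 B t v w hf _ ih => exact .rule2 B t' v w hf (ih ht)
  | rule3 B t 𝒲 vf wf hW hcard hforce _ ih =>
    exact .rule3 B t' 𝒲 vf wf hW hcard hforce fun 𝒮 hsub hne => ih 𝒮 hsub hne ht

theorem Win.of_union_finset [DecidableEq V] (s : Finset V) {B : Set V} {t : ℕ}
    (h : Win G q (↑s ∪ B) t) : Win G q B (t + #s) := by
  induction s using Finset.induction generalizing B t with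
  | empty => simpa using h
  | insert a s ha ih =>
    rw [card_insert_of_notMem ha, ← add_assoc, add_right_comm]
    refine ih (.rule1 _ _ a ?_)
    rwa [coe_insert, Set.insert_union] at h

theorem Win.le_of_potential (φ : Set V → ℕ)
    (h_univ : ∀ B : Set V, (∀ v, v ∈ B) → φ B = 0)
    (h_rule1 : ∀ B v, φ B ≤ φ (insert v B) + 1)
    (h_rule2 : ∀ B v w, Force G B v w → φ B ≤ φ (insert w B))
    (h_rule3 : ∀ B (𝒲 : Finset (Set V)) (vf wf : Finset (Set V) → V),
      (∀ W ∈ 𝒲, IsWhiteComp G B W) → q + 1 ≤ #𝒲 →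
      (∀ 𝒮 ⊆ 𝒲, 𝒮.Nonempty → ForceIn G B (⋃₀ (𝒮 : Set (Set V))) (vf 𝒮) (wf 𝒮)) →
      ∃ 𝒮 ⊆ 𝒲, 𝒮.Nonempty ∧ φ B ≤ φ (insert (wf 𝒮) B))
    {B : Set V} {t : ℕ} (h : Win G q B t) : φ B ≤ t := by
  induction h with
  | all B t hall => simp [h_univ B hall]
  | rule1 B t v _ ih => exact (h_rule1 B v).trans (by omega)
  | rule2 B t v w hf _ ih => exact (h_rule2 B v w hf).trans ih
  | rule3 B t 𝒲 vf wf hW hcard hforce _ ih =>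
    obtain ⟨𝒮, hsub, hne, hle⟩ := h_rule3 B 𝒲 vf wf hW hcard hforce
    exact hle.trans (ih 𝒮 hsub hne)

theorem cost_eq {B : Set V} {t : ℕ} (h : Win G q B t) (hle : ∀ t', Win G q B t' → t ≤ t') :
    cost G q B = t :=
  le_antisymm (Nat.sInf_le h) (le_csInf ⟨t, h⟩ hle)

theorem mem_whiteComp_self (B : Set V) (w : V) : w ∈ WhiteComp G B w :=
  Relation.ReflTransGen.refl

theorem whiteComp_eq_of_mem {B : Set V} {w x : V} (h : x ∈ WhiteComp G B w) :
    WhiteComp G B x = WhiteComp G B w := by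
  have : Std.Symm fun a b => G.Adj a b ∧ a ∉ B ∧ b ∉ B :=
    ⟨fun _ _ ⟨hab, ha, hb⟩ => ⟨hab.symm, hb, ha⟩⟩
  ext y
  exact ⟨fun hy => h.trans hy, fun hy => (Std.Symm.symm _ _ h).trans hy⟩

theorem whiteComp_eq_singleton {B : Set V} {x : V} (hx : ∀ u, G.Adj x u → u ∈ B) :
    WhiteComp G B x = {x} := by
  ext y
  refine ⟨fun hy => ?_, by rintro rfl; exact mem_whiteComp_self B y⟩
  rcases Relation.ReflTransGen.cases_head hy with rfl | ⟨u, ⟨hxu, -, hu⟩, -⟩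
  · rfl
  · exact (hu (hx u hxu)).elim

theorem Win.rule3_of_isolated {B : Set V} {t : ℕ} (X : Finset V) (c : V → V)
    (hX : q + 1 ≤ #X) (hwhite : ∀ x ∈ X, x ∉ B) (hnbr : ∀ x ∈ X, ∀ u, G.Adj x u → u ∈ B)
    (hc : ∀ x ∈ X, c x ∈ B ∧ G.Adj (c x) x) (hcX : ∀ x ∈ X, ∀ y ∈ X, G.Adj (c x) y → y = x)
    (hwin : ∀ x ∈ X, Win G q (insert x B) t) : Win G q B t := by
  classical
  obtain ⟨x₀, hx₀⟩ : X.Nonempty := card_pos.1 (by omega)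
  have hsel : ∀ 𝒮 : Finset (Set V), ∃ x : V,
      𝒮 ⊆ X.image ({·}) → 𝒮.Nonempty → x ∈ X ∧ {x} ∈ 𝒮 := by
    intro 𝒮
    by_cases h : 𝒮 ⊆ X.image ({·}) ∧ 𝒮.Nonempty
    · obtain ⟨hsub, W, hW⟩ := h
      obtain ⟨x, hx, rfl⟩ := mem_image.1 (hsub hW)
      exact ⟨x, fun _ _ => ⟨hx, hW⟩⟩
    · exact ⟨x₀, fun hs hn => (h ⟨hs, hn⟩).elim⟩
  choose sel hsel using hsel
  refine .rule3 B t (X.image ({·})) (fun 𝒮 => c (sel 𝒮)) sel ?_ ?_ ?_ ?_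
  · simp only [mem_image]
    rintro _ ⟨x, hx, rfl⟩
    exact ⟨x, hwhite x hx, (whiteComp_eq_singleton (hnbr x hx)).symm⟩
  · rwa [card_image_of_injective _ Set.singleton_injective]
  · intro 𝒮 hsub hne
    obtain ⟨hX, hmem⟩ := hsel 𝒮 hsub hne
    refine ⟨(hc _ hX).1, hwhite _ hX, Set.mem_sUnion.2 ⟨_, hmem, rfl⟩, (hc _ hX).2, ?_⟩
    rintro u hu - ⟨W, hW, huW⟩
    obtain ⟨y, hy, rfl⟩ := mem_image.1 (hsub hW)
    rw [Set.mem_singleton_iff.1 huW] at hu ⊢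
    exact hcX _ hX y hy hu
  · exact fun 𝒮 hsub hne => hwin _ (hsel 𝒮 hsub hne).1

end Game

section TopSum

variable {ι : Type*} [Fintype ι] {m : ℕ} {v w : ι → ℕ}

def topSum (m : ℕ) (v : ι → ℕ) : ℕ :=
  (univ.filter fun s : Finset ι => #s ≤ m).sup fun s => ∑ i ∈ s, v i

theorem sum_le_topSum (v : ι → ℕ) {s : Finset ι} (hs : #s ≤ m) :
    ∑ i ∈ s, v i ≤ topSum m v :=
  le_sup (f := fun s => ∑ i ∈ s, v i) (by simpa using hs)

theorem topSum_le {c : ℕ} (h : ∀ s : Finset ι, #s ≤ m → ∑ i ∈ s, v i ≤ c) : topSum m v ≤ c :=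
  Finset.sup_le fun s hs => h s (by simpa using hs)

theorem topSum_mono (h : ∀ i, v i ≤ w i) : topSum m v ≤ topSum m w :=
  topSum_le fun _ hs => (sum_le_sum fun i _ => h i).trans (sum_le_topSum w hs)

theorem topSum_le_add_one [DecidableEq ι] {i : ι} (hoff : ∀ j ≠ i, v j ≤ w j)
    (hi : v i ≤ w i + 1) : topSum m v ≤ topSum m w + 1 :=
  topSum_le fun s hs =>
    calc ∑ j ∈ s, v j ≤ ∑ j ∈ s, (w j + if j = i then 1 else 0) :=
          sum_le_sum fun j _ => by split_ifs <;> grind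
      _ ≤ ∑ j ∈ s, w j + 1 := by
          rw [sum_add_distrib, sum_ite_eq']
          split_ifs <;> simp
      _ ≤ topSum m w + 1 := Nat.add_le_add_right (sum_le_topSum w hs) 1

theorem topSum_le_of_exchange [DecidableEq ι] {i : ι} (s₀ : Finset ι) (hi : i ∉ s₀)
    (hs₀ : m ≤ #s₀) (hoff : ∀ j ≠ i, v j ≤ w j) (hex : ∀ j ∈ s₀, v i ≤ w j) :
    topSum m v ≤ topSum m w := by
  refine topSum_le fun s hs => ?_
  by_cases his : i ∈ s
  · obtain ⟨j, hj₀, hjs⟩ : ∃ j ∈ s₀, j ∉ s := by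
      by_contra! h
      have hsub : s₀ ⊆ s.erase i := fun j hj => mem_erase.2 ⟨ne_of_mem_of_not_mem hj hi, h j hj⟩
      have := card_le_card hsub
      rw [card_erase_of_mem his] at this
      have := card_pos.2 ⟨i, his⟩
      omega
    have hjs' : j ∉ s.erase i := fun h => hjs (mem_of_mem_erase h)
    calc ∑ l ∈ s, v l = v i + ∑ l ∈ s.erase i, v l := (add_sum_erase s v his).symm
      _ ≤ w j + ∑ l ∈ s.erase i, w l :=
          add_le_add (hex j hj₀) (sum_le_sum fun l hl => hoff l (ne_of_mem_erase hl))
      _ = ∑ l ∈ insert j (s.erase i), w l := (sum_insert hjs').symm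
      _ ≤ topSum m w := sum_le_topSum w (by
          rw [card_insert_of_notMem hjs', card_erase_of_mem his]
          have := card_pos.2 ⟨i, his⟩
          omega)
  · exact (sum_le_sum fun l hl => hoff l (ne_of_mem_of_not_mem hl his)).trans
      (sum_le_topSum w hs)

theorem topSum_eq_sum_of_support_subset {s : Finset ι} (hs : #s ≤ m) (hv : ∀ j ∉ s, v j = 0) :
    topSum m v = ∑ j ∈ s, v j :=
  le_antisymm (topSum_le fun _ _ =>
    sum_le_sum_of_ne_zero fun j _ hj => by_contra fun h => hj (hv j h))
    (sum_le_topSum v hs)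

end TopSum

theorem sum_le_sum_range_card {k : ℕ} {v : ℕ → ℕ} (hv : ∀ i j, i ≤ j → j < k → v j ≤ v i)
    (t : Finset ℕ) (ht : ∀ i ∈ t, i < k) : ∑ i ∈ t, v i ≤ ∑ i ∈ range #t, v i := by
  induction t using Finset.induction_on_max with
  | empty => simp
  | insert a s hlt ih =>
    have has : a ∉ s := fun h => lt_irrefl a (hlt a h)
    have hcard : #s ≤ a := by
      simpa using card_le_card (show s ⊆ range a from fun x hx => mem_range.2 (hlt x hx))
    rw [sum_insert has, card_insert_of_notMem has, sum_range_succ, add_comm]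
    exact add_le_add (ih fun i hi => ht i (mem_insert_of_mem hi))
      (hv _ _ hcard (ht a (mem_insert_self a s)))

theorem topSum_eq_sum_range {k : ℕ} {v : ℕ → ℕ} (hv : ∀ i j, i ≤ j → j < k → v j ≤ v i)
    (m : ℕ) : topSum m (fun i : Fin k => v i) = ∑ i ∈ range (min m k), v i := by
  have hinit : ({i : Fin k | (i : ℕ) < m} : Finset (Fin k)).map Fin.valEmbedding
      = range (min m k) := by
    ext x
    simp only [mem_map, mem_filter, mem_univ, true_and, Fin.valEmbedding_apply, mem_range,
      lt_min_iff]
    exact ⟨fun ⟨i, hi, hix⟩ => hix ▸ ⟨hi, i.isLt⟩, fun ⟨hm, hk⟩ => ⟨⟨x, hk⟩, hm, rfl⟩⟩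
  refine le_antisymm (topSum_le fun s hs => ?_) ?_
  · have hsk : #s ≤ k := by simpa using card_le_univ s
    calc ∑ i ∈ s, v i = ∑ i ∈ s.map Fin.valEmbedding, v i := by rw [sum_map]; rfl
      _ ≤ ∑ i ∈ range #(s.map Fin.valEmbedding), v i := sum_le_sum_range_card hv _ (by simp)
      _ ≤ ∑ i ∈ range (min m k), v i :=
          sum_le_sum_of_subset (range_subset_range.2 (by rw [card_map]; omega))
  · rw [← hinit, sum_map]
    refine sum_le_topSum _ ?_
    rw [← card_map Fin.valEmbedding, hinit, card_range]
    exact min_le_left m k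

namespace StarForest

abbrev Vert (k : ℕ) (n : ℕ → ℕ) := Σ i : Fin k, Fin (n i)

variable {k : ℕ} {n : ℕ → ℕ}

theorem ext_of_val {x y : Vert k n} (h₁ : x.1 = y.1) (h₂ : (x.2 : ℕ) = y.2) : x = y := by
  obtain ⟨i, a⟩ := x
  obtain ⟨j, b⟩ := y
  subst h₁
  simp only [Sigma.mk.injEq, heq_eq_eq, true_and]
  exact Fin.ext h₂

theorem adj_iff {x y : Vert k n} :
    (starForest k n).Adj x y ↔ x.1 = y.1 ∧ x ≠ y ∧ ((x.2 : ℕ) = 0 ∨ (y.2 : ℕ) = 0) := by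
  rw [starForest, fromRel_adj]
  grind

theorem fst_eq_of_adj {x y : Vert k n} (h : (starForest k n).Adj x y) : x.1 = y.1 :=
  (adj_iff.1 h).1

def center (x : Vert k n) : Vert k n := ⟨x.1, ⟨0, x.2.pos⟩⟩

theorem center_eq_self {x : Vert k n} (hx : (x.2 : ℕ) = 0) : center x = x :=
  ext_of_val rfl hx.symm

theorem center_eq_center {x y : Vert k n} (h : x.1 = y.1) : center x = center y :=
  ext_of_val h rfl

theorem adj_center {x : Vert k n} (hx : (x.2 : ℕ) ≠ 0) : (starForest k n).Adj (center x) x :=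
  adj_iff.2 ⟨rfl, fun h => hx (congrArg (fun y : Vert k n => (y.2 : ℕ)) h).symm, Or.inl rfl⟩

theorem eq_center_of_adj {v x : Vert k n} (hx : (x.2 : ℕ) ≠ 0)
    (h : (starForest k n).Adj v x) : v = center x := by
  obtain ⟨hfst, -, hv | hx'⟩ := adj_iff.1 h
  · exact ext_of_val hfst hv
  · exact absurd hx' hx

theorem val_ne_zero_of_center_adj {x u : Vert k n} (h : (starForest k n).Adj (center x) u) :
    (u.2 : ℕ) ≠ 0 :=
  fun hu => (adj_iff.1 h).2.1 (ext_of_val (adj_iff.1 h).1 hu.symm)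

theorem val_ne_zero_of_center_mem {B : Set (Vert k n)} {x : Vert k n} (hx : x ∉ B)
    (hc : center x ∈ B) : (x.2 : ℕ) ≠ 0 :=
  fun h => hx (center_eq_self h ▸ hc)

section WhiteComp

variable {B : Set (Vert k n)}

theorem fst_eq_of_mem_whiteComp {w x : Vert k n} (h : x ∈ WhiteComp (starForest k n) B w) :
    x.1 = w.1 := by
  induction h with
  | refl => rfl
  | tail _ hstep ih => exact (fst_eq_of_adj hstep.1).symm.trans ih

theorem center_mem_whiteComp {w : Vert k n} (hw : w ∉ B) (hc : center w ∉ B) :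
    center w ∈ WhiteComp (starForest k n) B w := by
  by_cases h : (w.2 : ℕ) = 0
  · rw [center_eq_self h]
    exact mem_whiteComp_self B w
  · exact Relation.ReflTransGen.single ⟨(adj_center h).symm, hw, hc⟩

theorem mem_whiteComp_of_fst_eq {w x : Vert k n} (hw : w ∉ B) (hx : x ∉ B)
    (hc : center w ∉ B) (h : x.1 = w.1) : x ∈ WhiteComp (starForest k n) B w := by
  have hcx : center x = center w := center_eq_center h
  rw [← whiteComp_eq_of_mem (center_mem_whiteComp hw hc), ← hcx,
    whiteComp_eq_of_mem (center_mem_whiteComp hx (hcx ▸ hc))]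
  exact mem_whiteComp_self B x

theorem eq_of_forceIn_union {W₁ W₂ : Set (Vert k n)} {x₁ x₂ v w : Vert k n} (h₁ : x₁ ∉ B)
    (h₂ : x₂ ∉ B) (hW₁ : W₁ = WhiteComp (starForest k n) B x₁)
    (hW₂ : W₂ = WhiteComp (starForest k n) B x₂) (hfst : x₁.1 = x₂.1)
    (hf : ForceIn (starForest k n) B (W₁ ∪ W₂) v w) : W₁ = W₂ := by
  subst hW₁ hW₂
  by_cases hc : center x₁ ∈ B
  · obtain ⟨-, hw, hwW, hvw, huniq⟩ := hf
    have hwfst : w.1 = x₁.1 := by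
      rcases hwW with hwW | hwW
      · exact fst_eq_of_mem_whiteComp hwW
      · exact (fst_eq_of_mem_whiteComp hwW).trans hfst.symm
    have hc₂ : center x₂ ∈ B := center_eq_center hfst ▸ hc
    have hwc : center w = center x₁ := center_eq_center hwfst
    have hv : v = center x₁ := hwc ▸ eq_center_of_adj (val_ne_zero_of_center_mem hw (hwc ▸ hc)) hvw
    have hx₁ : x₁ = w := huniq x₁ (hv ▸ adj_center (val_ne_zero_of_center_mem h₁ hc)) h₁
      (Or.inl (mem_whiteComp_self B x₁))
    have hx₂ : x₂ = w := huniq x₂ (hv ▸ center_eq_center hfst ▸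
      adj_center (val_ne_zero_of_center_mem h₂ hc₂)) h₂ (Or.inr (mem_whiteComp_self B x₂))
    rw [hx₁, hx₂]
  · exact (whiteComp_eq_of_mem (mem_whiteComp_of_fst_eq h₁ h₂ hc hfst.symm)).symm

end WhiteComp

open Classical in
noncomputable def whiteLeaves (B : Set (Vert k n)) (i : Fin k) : Finset (Vert k n) :=
  {x | x.1 = i ∧ (x.2 : ℕ) ≠ 0 ∧ x ∉ B}

open Classical in
noncomputable def whiteStars (B : Set (Vert k n)) : Finset (Fin k) :=
  {i | ∀ x : Vert k n, x.1 = i → x ∉ B}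

variable {B : Set (Vert k n)} {x : Vert k n} {i : Fin k}

theorem mem_whiteLeaves : x ∈ whiteLeaves B i ↔ x.1 = i ∧ (x.2 : ℕ) ≠ 0 ∧ x ∉ B := by
  simp [whiteLeaves]

theorem mem_whiteStars : i ∈ whiteStars B ↔ ∀ x : Vert k n, x.1 = i → x ∉ B := by
  simp [whiteStars]

theorem whiteLeaves_insert (y : Vert k n) :
    whiteLeaves (insert y B) i = (whiteLeaves B i).erase y := by
  ext x
  simp only [mem_erase, mem_whiteLeaves, Set.mem_insert_iff]
  tauto

theorem whiteStars_insert (y : Vert k n) : whiteStars (insert y B) = (whiteStars B).erase y.1 := by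
  ext j
  simp only [mem_erase, mem_whiteStars, Set.mem_insert_iff]
  grind

theorem whiteLeaves_eq_of_mem_whiteStars (h : i ∈ whiteStars B) :
    whiteLeaves B i = whiteLeaves ∅ i := by
  ext x
  simp only [mem_whiteLeaves, Set.mem_empty_iff_false, not_false_eq_true, and_true]
  exact ⟨fun h' => ⟨h'.1, h'.2.1⟩, fun h' => ⟨h'.1, h'.2, mem_whiteStars.1 h x h'.1⟩⟩

theorem card_whiteLeaves_empty (i : Fin k) : #(whiteLeaves (∅ : Set (Vert k n)) i) = n i - 1 := by
  have : whiteLeaves (∅ : Set (Vert k n)) i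
      = ({a : Fin (n i) | ¬ (a : ℕ) < 1} : Finset _).map (Function.Embedding.sigmaMk i) := by
    ext ⟨j, a⟩
    simp only [mem_whiteLeaves, mem_map, mem_filter, mem_univ, true_and,
      Function.Embedding.sigmaMk_apply, Set.mem_empty_iff_false, not_false_eq_true, and_true]
    constructor
    · rintro ⟨rfl, ha⟩
      exact ⟨a, by omega, rfl⟩
    · rintro ⟨b, hb, h⟩
      cases h
      exact ⟨rfl, by omega⟩
  rw [this, card_map, filter_not, card_sdiff, inter_univ, Fin.card_filter_val_lt, card_univ,
    Fintype.card_fin]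
  omega

theorem fst_notMem_whiteStars_of_adj {v w : Vert k n} (hv : v ∈ B)
    (h : (starForest k n).Adj v w) : w.1 ∉ whiteStars B :=
  fun hw => mem_whiteStars.1 hw v (fst_eq_of_adj h) hv

theorem whiteStars_insert_of_notMem (h : x.1 ∉ whiteStars B) :
    whiteStars (insert x B) = whiteStars B := by
  rw [whiteStars_insert, erase_eq_of_notMem h]

noncomputable def excess (B : Set (Vert k n)) (i : Fin k) : ℕ := #(whiteLeaves B i) - 1

theorem excess_insert_of_ne (h : x.1 ≠ i) : excess (insert x B) i = excess B i := by
  rw [excess, excess, whiteLeaves_insert, erase_eq_of_notMem fun hx => h (mem_whiteLeaves.1 hx).1]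

theorem excess_insert_of_val_eq_zero (h : (x.2 : ℕ) = 0) : excess (insert x B) i = excess B i := by
  rw [excess, excess, whiteLeaves_insert,
    erase_eq_of_notMem fun hx => (mem_whiteLeaves.1 hx).2.1 h]

theorem excess_insert_le (x : Vert k n) (i : Fin k) : excess (insert x B) i ≤ excess B i := by
  rw [excess, excess, whiteLeaves_insert]
  exact Nat.sub_le_sub_right (card_erase_le) 1

theorem excess_le_excess_insert_add_one (x : Vert k n) (i : Fin k) :
    excess B i ≤ excess (insert x B) i + 1 := by
  rw [excess, excess, whiteLeaves_insert]
  have := pred_card_le_card_erase (s := whiteLeaves B i) (a := x)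
  omega

open Classical in
noncomputable def weight (B : Set (Vert k n)) (i : Fin k) : ℕ :=
  if i ∈ whiteStars B then n i - 3 else excess B i

noncomputable def potential (q : ℕ) (B : Set (Vert k n)) : ℕ :=
  #(whiteStars B) + topSum q (weight B)

theorem weight_insert_of_ne (h : x.1 ≠ i) : weight (insert x B) i = weight B i := by
  simp only [weight, whiteStars_insert, mem_erase, ne_eq, Ne.symm h, not_false_eq_true, true_and,
    excess_insert_of_ne h]

theorem weight_of_notMem (h : i ∉ whiteStars B) : weight B i = excess B i := if_neg h

theorem potential_le_insert_add_one (q : ℕ) (B : Set (Vert k n)) (x : Vert k n) :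
    potential q B ≤ potential q (insert x B) + 1 := by
  have hoff : ∀ j ≠ x.1, weight B j ≤ weight (insert x B) j :=
    fun j hj => (weight_insert_of_ne (Ne.symm hj)).ge
  have hx : weight (insert x B) x.1 = excess (insert x B) x.1 :=
    weight_of_notMem (by simp [whiteStars_insert])
  by_cases hw : x.1 ∈ whiteStars B
  · have hcard : #(whiteStars B) = #(whiteStars (insert x B)) + 1 := by
      rw [whiteStars_insert, card_erase_add_one hw]
    have hle : weight B x.1 ≤ weight (insert x B) x.1 := by
      rw [hx, weight, if_pos hw, excess, whiteLeaves_insert, whiteLeaves_eq_of_mem_whiteStars hw]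
      have := pred_card_le_card_erase (s := whiteLeaves (∅ : Set (Vert k n)) x.1) (a := x)
      rw [card_whiteLeaves_empty] at this
      omega
    have := topSum_mono (m := q) fun j => if h : j = x.1 then h ▸ hle else hoff j h
    rw [potential, potential]
    omega
  · have hle : weight B x.1 ≤ weight (insert x B) x.1 + 1 := by
      rw [hx, weight_of_notMem hw]
      exact excess_le_excess_insert_add_one x x.1
    have := topSum_le_add_one (m := q) hoff hle
    rw [potential, potential, whiteStars_insert_of_notMem hw]
    omega

theorem excess_le_excess_insert_of_force {v w : Vert k n} (h : Force (starForest k n) B v w) :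
    excess B w.1 ≤ excess (insert w B) w.1 := by
  obtain ⟨-, -, -, hvw, huniq⟩ := h
  by_cases hw0 : (w.2 : ℕ) = 0
  · exact (excess_insert_of_val_eq_zero hw0).ge
  · have hvc : v = center w := eq_center_of_adj hw0 hvw
    have hsub : whiteLeaves B w.1 ⊆ {w} := fun y hy => by
      obtain ⟨hy1, hy0, hyB⟩ := mem_whiteLeaves.1 hy
      refine mem_singleton.2 (huniq y ?_ hyB trivial)
      rw [hvc, center_eq_center hy1.symm]
      exact adj_center hy0
    have := card_le_card hsub
    rw [card_singleton] at this
    simp only [excess]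
    omega

theorem potential_le_insert_of_force (q : ℕ) {v w : Vert k n}
    (h : Force (starForest k n) B v w) : potential q B ≤ potential q (insert w B) := by
  have hw : w.1 ∉ whiteStars B := fst_notMem_whiteStars_of_adj h.1 h.2.2.2.1
  have hle : ∀ j, weight B j ≤ weight (insert w B) j := fun j => by
    by_cases hj : j = w.1
    · subst hj
      rw [weight_of_notMem hw, weight_of_notMem (by simp [whiteStars_insert])]
      exact excess_le_excess_insert_of_force h
    · exact (weight_insert_of_ne (Ne.symm hj)).ge
  rw [potential, potential, whiteStars_insert_of_notMem hw]
  exact Nat.add_le_add_left (topSum_mono hle) _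

theorem potential_le_insert_of_exchange (q : ℕ) (hx : x.1 ∉ whiteStars B) (s₀ : Finset (Fin k))
    (hs₀ : x.1 ∉ s₀) (hcard : q ≤ #s₀) (hex : ∀ j ∈ s₀, weight B x.1 ≤ weight B j) :
    potential q B ≤ potential q (insert x B) := by
  have hoff : ∀ j ≠ x.1, weight B j ≤ weight (insert x B) j :=
    fun j hj => (weight_insert_of_ne (Ne.symm hj)).ge
  rw [potential, potential, whiteStars_insert_of_notMem hx]
  refine Nat.add_le_add_left (topSum_le_of_exchange s₀ hs₀ hcard hoff fun j hj => ?_) _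
  rw [weight_insert_of_ne fun h => hs₀ (h ▸ hj)]
  exact hex j hj

theorem exists_potential_le_of_rule3 (q : ℕ) (𝒲 : Finset (Set (Vert k n)))
    (vf wf : Finset (Set (Vert k n)) → Vert k n)
    (hW : ∀ W ∈ 𝒲, IsWhiteComp (starForest k n) B W) (hcard : q + 1 ≤ #𝒲)
    (hforce : ∀ 𝒮 ⊆ 𝒲, 𝒮.Nonempty →
      ForceIn (starForest k n) B (⋃₀ (𝒮 : Set (Set (Vert k n)))) (vf 𝒮) (wf 𝒮)) :
    ∃ 𝒮 ⊆ 𝒲, 𝒮.Nonempty ∧ potential q B ≤ potential q (insert (wf 𝒮) B) := by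
  classical
  obtain ⟨W₀, hW₀⟩ : 𝒲.Nonempty := card_pos.1 (by omega)
  have : Nonempty (Vert k n) := ⟨(hW W₀ hW₀).choose⟩
  choose! base hbase hWbase using hW
  have hinj : Set.InjOn (fun W => (base W).1) 𝒲 := by
    intro W₁ h₁ W₂ h₂ heq
    have hpair := hforce {W₁, W₂} (insert_subset_iff.2 ⟨h₁, singleton_subset_iff.2 h₂⟩)
      (insert_nonempty _ _)
    rw [coe_pair, Set.sUnion_pair] at hpair
    exact eq_of_forceIn_union (hbase W₁ h₁) (hbase W₂ h₂) (hWbase W₁ h₁) (hWbase W₂ h₂) heq hpair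
  obtain ⟨Wm, hWm, hmin⟩ := exists_min_image 𝒲 (fun W => weight B (base W).1) ⟨W₀, hW₀⟩
  refine ⟨{Wm}, singleton_subset_iff.2 hWm, singleton_nonempty _, ?_⟩
  obtain ⟨hv, -, hwW, hvw, -⟩ := hforce {Wm} (singleton_subset_iff.2 hWm) (singleton_nonempty _)
  have hx : (wf {Wm}).1 = (base Wm).1 := by
    rw [coe_singleton, Set.sUnion_singleton] at hwW
    exact fst_eq_of_mem_whiteComp ((Set.ext_iff.1 (hWbase Wm hWm) _).1 hwW)
  have hstars : (base Wm).1 ∈ 𝒲.image fun W => (base W).1 := mem_image_of_mem _ hWm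
  refine potential_le_insert_of_exchange q (fst_notMem_whiteStars_of_adj hv hvw)
    ((𝒲.image fun W => (base W).1).erase (base Wm).1) (hx ▸ notMem_erase _ _) ?_ ?_
  · rw [card_erase_of_mem hstars, card_image_of_injOn hinj]
    omega
  · intro j hj
    obtain ⟨W, hW, rfl⟩ := mem_image.1 (mem_of_mem_erase hj)
    exact hx ▸ hmin W hW

theorem potential_eq_zero (hn : ∀ i, 1 ≤ n i) (q : ℕ) (hB : ∀ v, v ∈ B) : potential q B = 0 := by
  have hstars : whiteStars B = ∅ :=
    eq_empty_of_forall_notMem fun i hi => mem_whiteStars.1 hi ⟨i, ⟨0, hn i⟩⟩ rfl (hB _)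
  have hleaves : ∀ i, whiteLeaves B i = ∅ :=
    fun i => eq_empty_of_forall_notMem fun x hx => (mem_whiteLeaves.1 hx).2.2 (hB x)
  have hweight : ∀ i, weight B i = 0 := fun i => by
    simp [weight, hstars, excess, hleaves]
  rw [potential, hstars, card_empty, zero_add]
  exact Nat.eq_zero_of_le_zero (topSum_le fun s _ => by simp [hweight])

theorem potential_empty (q : ℕ) :
    potential q (∅ : Set (Vert k n)) = k + topSum q (fun i : Fin k => n i - 3) := by
  have hstars : whiteStars (∅ : Set (Vert k n)) = univ :=
    eq_univ_of_forall fun i => mem_whiteStars.2 fun _ _ => Set.notMem_empty _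
  rw [potential, hstars, card_univ, Fintype.card_fin]
  congr 2
  funext i
  simp [weight, hstars]

theorem potential_le_of_win (hn : ∀ i, 1 ≤ n i) {q t : ℕ}
    (h : Win (starForest k n) q B t) : potential q B ≤ t :=
  h.le_of_potential (potential q) (fun _ => potential_eq_zero hn q)
    (potential_le_insert_add_one q) (fun _ _ _ => potential_le_insert_of_force q)
    (fun _ => exists_potential_le_of_rule3 q)

section Subgame

variable {q : ℕ}

theorem win_of_white_center (hB : whiteStars B = ∅) (hx : x ∉ B) (hx0 : (x.2 : ℕ) = 0)
    (ih : Win (starForest k n) q (insert x B) (topSum q (excess (insert x B)))) :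
    Win (starForest k n) q B (topSum q (excess B)) := by
  obtain ⟨y, hy1, hyB⟩ : ∃ y : Vert k n, y.1 = x.1 ∧ y ∈ B := by
    by_contra! h
    exact eq_empty_iff_forall_notMem.1 hB x.1 (mem_whiteStars.2 h)
  have hy0 : (y.2 : ℕ) ≠ 0 := fun h => hx (ext_of_val hy1 (h.trans hx0.symm) ▸ hyB)
  have hcy : center y = x := (center_eq_center hy1).trans (center_eq_self hx0)
  have hexc : excess (insert x B) = excess B := funext fun _ => excess_insert_of_val_eq_zero hx0
  refine .rule2 B _ y x ⟨hyB, hx, trivial, hcy ▸ (adj_center hy0).symm, ?_⟩ (hexc ▸ ih)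
  exact fun u hu _ _ => hcy ▸ eq_center_of_adj hy0 hu.symm

theorem win_of_card_whiteLeaves_eq_one (hc : ∀ x : Vert k n, (x.2 : ℕ) = 0 → x ∈ B)
    (hi : #(whiteLeaves B i) = 1)
    (ih : ∀ x ∉ B, Win (starForest k n) q (insert x B) (topSum q (excess (insert x B)))) :
    Win (starForest k n) q B (topSum q (excess B)) := by
  obtain ⟨y, hy⟩ := card_eq_one.1 hi
  obtain ⟨hy1, hy0, hyB⟩ := mem_whiteLeaves.1 (hy ▸ mem_singleton_self y)
  have hexc : excess (insert y B) = excess B := funext fun j => by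
    by_cases hj : y.1 = j
    · subst hj hy1
      simp [excess, whiteLeaves_insert, hy]
    · exact excess_insert_of_ne hj
  refine .rule2 B _ (center y) y ⟨hc _ rfl, hyB, trivial, adj_center hy0, ?_⟩ (hexc ▸ ih y hyB)
  intro u hu huB _
  have hu' : u ∈ whiteLeaves B i :=
    mem_whiteLeaves.2 ⟨(fst_eq_of_adj hu).symm.trans hy1, val_ne_zero_of_center_adj hu, huB⟩
  simpa [hy] using hu'

theorem win_of_few_active {i₀ : Fin k} (hi₀ : 2 ≤ #(whiteLeaves B i₀))
    (hfew : #({i | 2 ≤ #(whiteLeaves B i)} : Finset (Fin k)) ≤ q)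
    (ih : ∀ x ∉ B, Win (starForest k n) q (insert x B) (topSum q (excess (insert x B)))) :
    Win (starForest k n) q B (topSum q (excess B)) := by
  set P : Finset (Fin k) := {i | 2 ≤ #(whiteLeaves B i)}
  have hi₀P : i₀ ∈ P := mem_filter.2 ⟨mem_univ _, hi₀⟩
  obtain ⟨x, hx⟩ := card_pos.1 (by omega : 0 < #(whiteLeaves B i₀))
  obtain ⟨hx1, -, hxB⟩ := mem_whiteLeaves.1 hx
  have hsupp : ∀ j ∉ P, excess B j = 0 := fun j hj => by
    simp only [P, mem_filter, mem_univ, true_and, not_le] at hj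
    simp only [excess]
    omega
  have hsupp' : ∀ j ∉ P, excess (insert x B) j = 0 :=
    fun j hj => Nat.eq_zero_of_le_zero (hsupp j hj ▸ excess_insert_le x j)
  have hdec : excess (insert x B) i₀ + 1 = excess B i₀ := by
    simp only [excess, whiteLeaves_insert, card_erase_of_mem hx]
    omega
  have hsum : ∑ j ∈ P, excess (insert x B) j + 1 = ∑ j ∈ P, excess B j := by
    rw [← add_sum_erase P _ hi₀P, ← add_sum_erase P _ hi₀P,
      sum_congr rfl fun j hj => excess_insert_of_ne (hx1.trans_ne (ne_of_mem_erase hj).symm)]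
    omega
  refine (Win.rule1 B _ x (ih x hxB)).mono ?_
  rw [topSum_eq_sum_of_support_subset hfew hsupp', topSum_eq_sum_of_support_subset hfew hsupp,
    hsum]

theorem win_of_many_active (hc : ∀ x : Vert k n, (x.2 : ℕ) = 0 → x ∈ B)
    (hmany : q + 1 ≤ #({i | 2 ≤ #(whiteLeaves B i)} : Finset (Fin k)))
    (ih : ∀ x ∉ B, Win (starForest k n) q (insert x B) (topSum q (excess (insert x B)))) :
    Win (starForest k n) q B (topSum q (excess B)) := by
  classical
  set P : Finset (Fin k) := {i | 2 ≤ #(whiteLeaves B i)}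
  have hP : ∀ i ∈ P, ∃ x, x ∈ whiteLeaves B i := fun i hi =>
    card_pos.1 (by simp only [P, mem_filter, mem_univ, true_and] at hi; omega)
  obtain ⟨i₀, hi₀⟩ : P.Nonempty := card_pos.1 (by omega)
  have : Nonempty (Vert k n) := ⟨(hP i₀ hi₀).choose⟩
  choose! pick hpick using hP
  replace hpick := fun i hi => mem_whiteLeaves.1 (hpick i hi)
  have hinj : Set.InjOn pick P := fun i hi j hj h =>
    (hpick i hi).1.symm.trans (h ▸ (hpick j hj).1)
  refine Win.rule3_of_isolated (P.image pick) center ?_ ?_ ?_ ?_ ?_ ?_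
  · rwa [card_image_of_injOn hinj]
  · simp only [mem_image]
    rintro _ ⟨i, hi, rfl⟩
    exact (hpick i hi).2.2
  · simp only [mem_image]
    rintro _ ⟨i, hi, rfl⟩ u hu
    rw [eq_center_of_adj (hpick i hi).2.1 hu.symm]
    exact hc _ rfl
  · simp only [mem_image]
    rintro _ ⟨i, hi, rfl⟩
    exact ⟨hc _ rfl, adj_center (hpick i hi).2.1⟩
  · simp only [mem_image]
    rintro _ ⟨i, hi, rfl⟩ _ ⟨j, hj, rfl⟩ hadj
    have hij : j = i := (hpick j hj).1.symm.trans ((fst_eq_of_adj hadj).symm.trans (hpick i hi).1)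
    rw [hij]
  · intro x hx
    exact (ih x ((mem_image.1 hx).elim fun i ⟨hi, h⟩ => h ▸ (hpick i hi).2.2)).mono
      (topSum_mono (excess_insert_le x))

theorem win_of_whiteStars_eq_empty (q : ℕ) (B : Set (Vert k n)) (hB : whiteStars B = ∅) :
    Win (starForest k n) q B (topSum q (excess B)) := by
  classical
  induction hN : #({x | x ∉ B} : Finset (Vert k n)) using Nat.strong_induction_on
    generalizing B with
  | _ N ih =>
  have ih' : ∀ x ∉ B, Win (starForest k n) q (insert x B) (topSum q (excess (insert x B))) := by
    intro x hx
    refine ih _ ?_ _ (by rw [whiteStars_insert, hB, erase_empty]) rfl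
    calc _ = #(({y | y ∉ B} : Finset (Vert k n)).erase x) := by
          congr 1
          ext y
          simp only [mem_filter, mem_univ, true_and, mem_erase, Set.mem_insert_iff]
          tauto
      _ < N := hN ▸ card_erase_lt_of_mem (by simpa using hx)
  by_cases hall : ∀ v, v ∈ B
  · exact .all _ _ hall
  by_cases hcen : ∃ x ∉ B, (x.2 : ℕ) = 0
  · obtain ⟨x, hx, hx0⟩ := hcen
    exact win_of_white_center hB hx hx0 (ih' x hx)
  push Not at hall hcen
  have hc : ∀ x : Vert k n, (x.2 : ℕ) = 0 → x ∈ B := fun x hx0 =>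
    by_contra fun hx => hcen x hx hx0
  by_cases hmany : q + 1 ≤ #({i | 2 ≤ #(whiteLeaves B i)} : Finset (Fin k))
  · exact win_of_many_active hc hmany ih'
  by_cases hact : ∃ i, 2 ≤ #(whiteLeaves B i)
  · obtain ⟨i, hi⟩ := hact
    exact win_of_few_active hi (by omega) ih'
  push Not at hact
  obtain ⟨x, hx⟩ := hall
  have hone : #(whiteLeaves B x.1) = 1 := le_antisymm (Nat.le_of_lt_succ (hact x.1))
    (card_pos.2 ⟨x, mem_whiteLeaves.2 ⟨rfl, hcen x hx, hx⟩⟩)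
  exact win_of_card_whiteLeaves_eq_one hc hone ih'

end Subgame

def lastVertices (k : ℕ) (n : ℕ → ℕ) : Finset (Vert k n) := {x | (x.2 : ℕ) + 1 = n x.1}

theorem mem_lastVertices {x : Vert k n} : x ∈ lastVertices k n ↔ (x.2 : ℕ) + 1 = n x.1 := by
  simp [lastVertices]

theorem card_lastVertices_le : #(lastVertices k n) ≤ k := by
  refine (card_le_card_of_injOn Sigma.fst (fun _ _ => mem_coe.2 (mem_univ _)) ?_).trans (by simp)
  intro x hx y hy h
  have hn' : n x.1 = n y.1 := by rw [h]
  have := mem_lastVertices.1 hx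
  have := mem_lastVertices.1 hy
  exact ext_of_val h (by omega)

theorem whiteStars_lastVertices (hn : ∀ i, 1 ≤ n i) :
    whiteStars (lastVertices k n : Set (Vert k n)) = ∅ :=
  eq_empty_of_forall_notMem fun i hi => mem_whiteStars.1 hi ⟨i, ⟨n i - 1, by grind⟩⟩ rfl
    (mem_lastVertices.2 (by grind))

theorem excess_lastVertices_le (i : Fin k) :
    excess (lastVertices k n : Set (Vert k n)) i ≤ n i - 3 := by
  have hsub : whiteLeaves (lastVertices k n : Set (Vert k n)) i ⊆ whiteLeaves ∅ i :=
    fun x hx => mem_whiteLeaves.2 ⟨(mem_whiteLeaves.1 hx).1, (mem_whiteLeaves.1 hx).2.1, id⟩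
  have hcard := card_whiteLeaves_empty (n := n) i
  by_cases h : 2 ≤ n i
  · let y : Vert k n := ⟨i, ⟨n i - 1, by omega⟩⟩
    have hy : y ∈ whiteLeaves ∅ i := mem_whiteLeaves.2 ⟨rfl, by simp [y]; omega, id⟩
    have hy' : y ∉ whiteLeaves (lastVertices k n : Set (Vert k n)) i := fun hy' =>
      (mem_whiteLeaves.1 hy').2.2 (mem_lastVertices.2 (by simp [y]; omega))
    have := card_lt_card (ssubset_of_subset_of_ne hsub fun he => hy' (he ▸ hy))
    simp only [excess]
    omega
  · have := card_le_card hsub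
    simp only [excess]
    omega

theorem win_empty (hn : ∀ i, 1 ≤ n i) (q : ℕ) :
    Win (starForest k n) q ∅ (topSum q (fun i : Fin k => n i - 3) + k) := by
  have hwin := (win_of_whiteStars_eq_empty q _ (whiteStars_lastVertices hn)).mono
    (topSum_mono (w := fun i : Fin k => n i - 3) excess_lastVertices_le)
  rw [← Set.union_empty (lastVertices k n : Set (Vert k n))] at hwin
  exact (hwin.of_union_finset _).mono (Nat.add_le_add_left card_lastVertices_le _)

end StarForest

end ZqGame

theorem Zq_starForest_general (k q : ℕ) (n : ℕ → ℕ) (hn : ∀ i, 1 ≤ n i)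
    (hmono : ∀ i j, i ≤ j → j < k → n j ≤ n i) :
    ZqGame.Zq (ZqGame.starForest k n) q =
      if q < k then k - q + ∑ i ∈ Finset.range q, max 1 (n i - 2)
      else ∑ i ∈ Finset.range k, max 1 (n i - 2) := by
  have hZq : ZqGame.Zq (ZqGame.starForest k n) q = ∑ i ∈ range (min q k), (n i - 3) + k := by
    rw [← ZqGame.topSum_eq_sum_range fun i j hij hj => Nat.sub_le_sub_right (hmono i j hij hj) 3]
    refine ZqGame.cost_eq (ZqGame.StarForest.win_empty hn q) fun t ht => ?_
    have := ZqGame.StarForest.potential_le_of_win hn ht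
    rw [ZqGame.StarForest.potential_empty] at this
    omega
  have hmax (m : ℕ) : max 1 (m - 2) = (m - 3) + 1 := by omega
  simp only [hmax, sum_add_distrib, sum_const, card_range, smul_eq_mul, mul_one] at hZq ⊢
  split_ifs with hq
  · rw [hZq, min_eq_left hq.le]
    omega
  · rw [hZq, min_eq_right (not_lt.1 hq)]

/-- `Z_q` of a forest of `k` stars `S_{n 0}, …, S_{n (k-1)}` with
`n 0 ≥ n 1 ≥ ⋯ ≥ n (k-1)` (each star nonempty): if `q < k` then
`Z_q = (k - q) + ∑_{i < q} Z(S_{n i})`, and if `q ≥ k` then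
`Z_q = ∑_{i < k} Z(S_{n i})`, where `Z(S_m) = max 1 (m - 2)` is the standard zero
forcing number of the star on `m` vertices. -/
theorem Zq_starForest (k q : ℕ) (hk : 1 ≤ k) (n : ℕ → ℕ) (hn : ∀ i, 1 ≤ n i)
    (hmono : ∀ i j, i ≤ j → j < k → n j ≤ n i) :
    ZqGame.Zq (ZqGame.starForest k n) q =
      if q < k then k - q + ∑ i ∈ Finset.range q, max 1 (n i - 2)
      else ∑ i ∈ Finset.range k, max 1 (n i - 2) :=
  Zq_starForest_general k q n hn hmono
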